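/- Let ψ : [0,1] → ℝ be integrable, S = {t ∈ [0,1] : ψ(t) < 0}, and let w : [0,1] → ℝ be measurable with r_L ≤ w(t) ≤ r_U for all t, where 0 ≤ r_L ≤ r_U. Suppose ∫_0^1 max{−ψ(t), 0} dt ≤ ε ∫_0^1 |ψ(t)| dt for some ε ∈ (0, 1/2) and r_U ≤ r_L (1/ε − 1). Then ∫_0^1 w(t) ψ(t) dt ≥ 0. -/

import Mathlib

open MeasureTheory

/-- Key weighting inequality: if the negative part of ψ is at most ε times ∫|ψ|,
and the weight w takes values in [r_L, r_U] with 0 ≤ r_L ≤ r_U ≤ r_L(1/ε - 1),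
then ∫ w ψ ≥ 0. -/
theorem weighting_inequality
    (ψ w : ℝ → ℝ) (hψ : IntegrableOn ψ (Set.Icc 0 1)) (hw : Measurable w)
    (rL rU : ℝ) (hrL : 0 ≤ rL) (hrLU : rL ≤ rU)
    (hwb : ∀ t, rL ≤ w t ∧ w t ≤ rU)
    (ε : ℝ) (hε : ε ∈ Set.Ioo (0 : ℝ) (1 / 2))
    (hratio : rU ≤ rL * (1 / ε - 1))
    (hdom : (∫ t in Set.Icc (0 : ℝ) 1, max (-ψ t) 0) ≤
      ε * ∫ t in Set.Icc (0 : ℝ) 1, |ψ t|) :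
    0 ≤ ∫ t in Set.Icc (0 : ℝ) 1, w t * ψ t := by
  obtain ⟨hε0, hε2⟩ := hε
  set P : ℝ → ℝ := fun t => max (ψ t) 0 with hP
  set N : ℝ → ℝ := fun t => max (-ψ t) 0 with hN
  have hPint : IntegrableOn P (Set.Icc 0 1) := hψ.pos_part
  have hNint : IntegrableOn N (Set.Icc 0 1) := hψ.neg.pos_part
  have hwbound : ∀ t, ‖w t‖ ≤ rU := by
    intro t
    rw [Real.norm_eq_abs, abs_le]
    exact ⟨le_trans (by linarith [(hwb t).1, (hwb t).2]) (hwb t).1, (hwb t).2⟩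
  have hwP : IntegrableOn (fun t => w t * P t) (Set.Icc 0 1) :=
    hPint.bdd_mul hw.aestronglyMeasurable (Filter.Eventually.of_forall hwbound)
  have hwN : IntegrableOn (fun t => w t * N t) (Set.Icc 0 1) :=
    hNint.bdd_mul hw.aestronglyMeasurable (Filter.Eventually.of_forall hwbound)
  have hNnn : ∀ t, 0 ≤ N t := fun t => le_max_right _ _
  have hPnn : ∀ t, 0 ≤ P t := fun t => le_max_right _ _
  -- split integral
  have hsplit : (∫ t in Set.Icc (0 : ℝ) 1, w t * ψ t)
      = (∫ t in Set.Icc (0 : ℝ) 1, w t * P t) - ∫ t in Set.Icc (0 : ℝ) 1, w t * N t := by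
    rw [← integral_sub hwP hwN]
    apply setIntegral_congr_fun measurableSet_Icc
    intro t _
    simp only [hP, hN]
    rcases le_total (ψ t) 0 with h | h
    · simp [max_eq_right h, max_eq_left (by linarith : (0:ℝ) ≤ -ψ t)]
    · simp [max_eq_left h, max_eq_right (by linarith : -ψ t ≤ 0)]
  have habs : (∫ t in Set.Icc (0 : ℝ) 1, |ψ t|)
      = (∫ t in Set.Icc (0 : ℝ) 1, P t) + ∫ t in Set.Icc (0 : ℝ) 1, N t := by
    rw [← integral_add hPint hNint]
    apply setIntegral_congr_fun measurableSet_Icc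
    intro t _
    simp only [hP, hN]
    rcases le_total (ψ t) 0 with h | h
    · simp [max_eq_right h, max_eq_left (by linarith : (0:ℝ) ≤ -ψ t), abs_of_nonpos h]
    · simp [max_eq_left h, max_eq_right (by linarith : -ψ t ≤ 0), abs_of_nonneg h]
  have hIP0 : 0 ≤ ∫ t in Set.Icc (0 : ℝ) 1, P t :=
    setIntegral_nonneg measurableSet_Icc (fun t _ => hPnn t)
  have hIN0 : 0 ≤ ∫ t in Set.Icc (0 : ℝ) 1, N t :=
    setIntegral_nonneg measurableSet_Icc (fun t _ => hNnn t)
  have h1 : rL * (∫ t in Set.Icc (0 : ℝ) 1, P t) ≤ ∫ t in Set.Icc (0 : ℝ) 1, w t * P t := by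
    rw [← integral_const_mul]
    apply setIntegral_mono (hPint.const_mul rL) hwP
    intro t
    exact mul_le_mul_of_nonneg_right (hwb t).1 (hPnn t)
  have h2 : (∫ t in Set.Icc (0 : ℝ) 1, w t * N t) ≤ rU * ∫ t in Set.Icc (0 : ℝ) 1, N t := by
    rw [← integral_const_mul]
    apply setIntegral_mono hwN (hNint.const_mul rU)
    intro t
    exact mul_le_mul_of_nonneg_right (hwb t).2 (hNnn t)
  rw [hsplit]
  rw [habs] at hdom
  set IP := ∫ t in Set.Icc (0 : ℝ) 1, P t
  set IN := ∫ t in Set.Icc (0 : ℝ) 1, N t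
  have key : rU * IN ≤ rL * IP := by
    have hNP : IN * (1 - ε) ≤ ε * IP := by nlinarith
    have : rU * IN ≤ rL * (1 / ε - 1) * IN :=
      mul_le_mul_of_nonneg_right hratio hIN0
    refine this.trans ?_
    rw [div_sub' (ne_of_gt hε0)]
    rw [mul_comm rL _, mul_assoc, div_mul_eq_mul_div, div_le_iff₀ hε0]
    nlinarith
  linarith
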